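/- Let α ∈ (0,2], C̄ ∈ [1,∞) and θ₀ ∈ [0,∞). If ψ* ∈ WUSC(α, θ₀, C̄), then for all λ ∈ (0,1] and all r > 0 with r < 1/θ₀ (all r > 0 if θ₀ = 0), one has h(λr) ≤ 16(1+2d) C̄ λ^{−α} h(r). -/

import Mathlib

open MeasureTheory Real Filter Topology
open scoped ENNReal NNReal

noncomputable section

/-- Euclidean space `ℝ^d`. -/
abbrev Rd (d : ℕ) := EuclideanSpace ℝ (Fin d)

/-- `ν` is a Lévy measure: `ν({0}) = 0` and `∫ min(1,|z|) ν(dz) < ∞`. -/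
def LevyMeasure {d : ℕ} (ν : Measure (Rd d)) : Prop :=
  ν {0} = 0 ∧ (∫⁻ z, ENNReal.ofReal (min 1 ‖z‖) ∂ν) < ∞

/-- The symbol `ψ(ξ) = ∫ (1 - e^{i⟨ξ,z⟩}) ν(dz)`. -/
def psiSymb {d : ℕ} (ν : Measure (Rd d)) (ξ : Rd d) : ℂ :=
  ∫ z, (1 - Complex.exp (Complex.I * ((inner ℝ ξ z : ℝ) : ℂ))) ∂ν

/-- `ψ*(r) = sup_{|ξ| ≤ r} Re ψ(ξ)`. -/
def psiStar {d : ℕ} (ν : Measure (Rd d)) (r : ℝ) : ℝ :=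
  sSup {u | ∃ ξ : Rd d, ‖ξ‖ ≤ r ∧ u = (psiSymb ν ξ).re}

/-- The concentration function `h(r) = ∫ min(1, |x|²/r²) ν(dx)`. -/
def hFn {d : ℕ} (ν : Measure (Rd d)) (r : ℝ) : ℝ :=
  ∫ x, min 1 (‖x‖ ^ 2 / r ^ 2) ∂ν

/-- Weak upper scaling condition at infinity: `φ(λθ) ≤ C̄ λ^α φ(θ)` for `λ ≥ 1`, `θ > θ₀`. -/
def WUSC (α θ₀ Cb : ℝ) (φ : ℝ → ℝ) : Prop :=
  ∀ lam ≥ (1 : ℝ), ∀ θ > θ₀, φ (lam * θ) ≤ Cb * lam ^ α * φ θ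

/-- The set of Hölder quotients `|f x - f y| / |x - y|^β` over `0 < |x-y| ≤ 1`. -/
def holderSet {d : ℕ} (β : ℝ) (f : Rd d → ℝ) : Set ℝ :=
  {q | ∃ x y : Rd d, x ≠ y ∧ dist x y ≤ 1 ∧ q = |f x - f y| / dist x y ^ β}

/-- The Hölder seminorm `⦀f⦀_β`. -/
def holderSemi {d : ℕ} (β : ℝ) (f : Rd d → ℝ) : ℝ := sSup (holderSet β f)

/-- The supremum norm `‖f‖_∞`. -/
def supNorm {d : ℕ} (f : Rd d → ℝ) : ℝ := ⨆ x, |f x|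

/-- `f ∈ C₀^β`: continuous, vanishing at infinity, with finite Hölder seminorm. -/
def memC0beta {d : ℕ} (β : ℝ) (f : Rd d → ℝ) : Prop :=
  Continuous f ∧ Tendsto f (cocompact (Rd d)) (𝓝 0) ∧ BddAbove (holderSet β f)

/-- `‖f‖_β = ⦀f⦀_β + ‖f‖_∞`. -/
def holderNorm {d : ℕ} (β : ℝ) (f : Rd d → ℝ) : ℝ := holderSemi β f + supNorm f

/-- The generator `L f(x) = ∫ (f(x+y) - f(x)) ν(dy)`. -/
def Lop {d : ℕ} (ν : Measure (Rd d)) (f : Rd d → ℝ) (x : Rd d) : ℝ :=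
  ∫ y, (f (x + y) - f x) ∂ν

/-- The covariance function `g_Ω(y) = |Ω ∩ (Ω + y)|`. -/
def covFn {d : ℕ} (Ω : Set (Rd d)) (y : Rd d) : ℝ :=
  (volume (Ω ∩ ((fun z => z + y) '' Ω))).toReal

/-- The set of values `∫_Ω div φ` over `C¹` compactly supported `φ` with `‖φ‖_∞ ≤ 1`. -/
def perSet {d : ℕ} (Ω : Set (Rd d)) : Set ℝ :=
  {r | ∃ φ : Rd d → Rd d, ContDiff ℝ 1 φ ∧ HasCompactSupport φ ∧ (∀ x, ‖φ x‖ ≤ 1) ∧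
    r = ∫ x in Ω, (∑ i, fderiv ℝ φ x (EuclideanSpace.single i 1) i)}

/-- The classical perimeter `Per(Ω)`. -/
def per {d : ℕ} (Ω : Set (Rd d)) : ℝ := sSup (perSet Ω)

/-- The nonlocal perimeter `Per_ν(Ω) = ∫ (g_Ω(0) - g_Ω(y)) ν(dy)`. -/
def perNu {d : ℕ} (ν : Measure (Rd d)) (Ω : Set (Rd d)) : ℝ :=
  ∫ y, (covFn Ω 0 - covFn Ω y) ∂ν

/-- The heat content remainder `H(t) = ∫ (g_Ω(0) - g_Ω(y)) p_t(dy)`. -/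
def heatRem {d : ℕ} (Ω : Set (Rd d)) (p : ℝ → Measure (Rd d)) (t : ℝ) : ℝ :=
  ∫ y, (covFn Ω 0 - covFn Ω y) ∂(p t)

/-- The characteristic function of a measure `μ` on `ℝ^d`. -/
def charFn {d : ℕ} (μ : Measure (Rd d)) (ξ : Rd d) : ℂ :=
  ∫ x, Complex.exp (Complex.I * ((inner ℝ ξ x : ℝ) : ℂ)) ∂μ

/-- The isotropic `α`-stable Lévy measure `ν^{(α)}(dz) = A_{d,-α} |z|^{-d-α} dz`. -/
def stableLevy (d : ℕ) (α : ℝ) : Measure (Rd d) :=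
  volume.withDensity fun z => ENNReal.ofReal
    ((2 ^ α * Real.Gamma (((d : ℝ) + α) / 2) /
      (Real.pi ^ ((d : ℝ) / 2) * |Real.Gamma (-(α / 2))|)) * ‖z‖ ^ (-(d : ℝ) - α))

/-!
Two comparisons between `ψ*` and `h` do the work. Since `1 - cos t ≤ 2 min(1, t²)`, one has
`Re ψ(ξ) ≤ 2 h(1/|ξ|)`, hence `ψ*(r) ≤ 2 h(1/r)`. Conversely, averaging `Re ψ(τ e)` over
`τ ∈ [-a, a]` and exchanging the integrals (Tonelli; a Lévy measure is s-finite) gives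
`∫ (1 - sinc(a⟪e, x⟫)) ν(dx) ≤ ψ*(a)` for `|e| ≤ 1`; applied to the coordinate vectors together
with `1 - sinc u ≥ min(1, u²)/14`, this yields `h(s) ≤ 14 d ψ*(1/s)`. Then, with `θ = 1/r > θ₀`,
`h(λr) ≤ 14 d ψ*(λ⁻¹θ) ≤ 14 d C̄ λ^{-α} ψ*(θ) ≤ 28 d C̄ λ^{-α} h(r)`.
-/

lemma one_sub_cos_le_two_mul_min_one_sq (t : ℝ) : 1 - cos t ≤ 2 * min 1 (t ^ 2) := by
  rcases le_total (t ^ 2) 1 with h | h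
  · rw [min_eq_right h]
    linarith [one_sub_sq_div_two_le_cos (x := t), sq_nonneg t]
  · rw [min_eq_left h]
    linarith [neg_one_le_cos t]

lemma norm_one_sub_exp_I_mul_le (t : ℝ) :
    ‖1 - Complex.exp (Complex.I * t)‖ ≤ 2 * min 1 |t| := by
  have hsmall : ‖1 - Complex.exp (Complex.I * t)‖ ≤ |t| := by
    rw [norm_sub_rev]
    exact norm_exp_I_mul_ofReal_sub_one_le
  have hlarge : ‖1 - Complex.exp (Complex.I * t)‖ ≤ 2 := by
    calc ‖1 - Complex.exp (Complex.I * t)‖ ≤ ‖(1 : ℂ)‖ + ‖Complex.exp (Complex.I * t)‖ :=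
          norm_sub_le _ _
      _ = 2 := by rw [mul_comm, Complex.norm_exp_ofReal_mul_I]; norm_num
  rcases le_total |t| 1 with h | h
  · rw [min_eq_right h]; linarith [abs_nonneg t]
  · rw [min_eq_left h]; linarith

lemma min_one_mul_le_max_mul_min_one (c : ℝ) {x : ℝ} (hx : 0 ≤ x) :
    min 1 (c * x) ≤ max 1 c * min 1 x := by
  rcases le_total x 1 with h | h
  · rw [min_eq_right h]
    exact (min_le_right _ _).trans (mul_le_mul_of_nonneg_right (le_max_right _ _) hx)
  · rw [min_eq_left h, mul_one]
    exact (min_le_left _ _).trans (le_max_left _ _)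

lemma min_one_sq_le_min_one {x : ℝ} (hx : 0 ≤ x) : min 1 (x ^ 2) ≤ min 1 x := by
  rcases le_total x 1 with h | h
  · exact min_le_min le_rfl (by nlinarith)
  · rw [min_eq_left h]; exact min_le_left _ _

lemma min_one_sum_le_sum_min_one {ι : Type*} (s : Finset ι) {f : ι → ℝ} (hf : ∀ i ∈ s, 0 ≤ f i) :
    min 1 (∑ i ∈ s, f i) ≤ ∑ i ∈ s, min 1 (f i) :=
  Finset.le_sum_of_subadditive_on_pred (min 1) (0 ≤ ·) (by simp) (fun _ _ _ _ => by grind)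
    (fun _ _ => add_nonneg) f hf

lemma sin_le_sub_cube_div_fourteen {u : ℝ} (h0 : 0 ≤ u) (h1 : u ≤ 1) :
    sin u ≤ u - u ^ 3 / 14 := by
  have h := (abs_le.1 (sin_bound (x := u) (by rwa [abs_of_nonneg h0]))).2
  rw [abs_of_nonneg h0] at h
  have hu4 : u ^ 4 ≤ u ^ 3 := pow_le_pow_of_le_one h0 h1 (by norm_num)
  nlinarith [pow_nonneg h0 3]

lemma sinc_le_one_sub_min_one_sq_div (u : ℝ) : sinc u ≤ 1 - min 1 (u ^ 2) / 14 := by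
  wlog hu : 0 < u generalizing u
  · rcases (not_lt.1 hu).eq_or_lt with rfl | hneg
    · simp
    · simpa using this (-u) (neg_pos.2 hneg)
  rw [sinc_of_ne_zero hu.ne', div_le_iff₀ hu]
  rcases le_total u 1 with h1 | h1
  · rw [min_eq_right (by nlinarith)]
    nlinarith [sin_le_sub_cube_div_fourteen hu.le h1]
  · rw [min_eq_left (by nlinarith)]
    -- for `u` near 1, `sin u ≤ sin 1 + (u - 1)` with `sin 1 ≤ 85/96`; beyond, `sin u ≤ 1`
    have hsin1 : sin 1 ≤ 85 / 96 := by
      have := (abs_le.1 (sin_bound (x := 1) (by norm_num))).2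
      norm_num at this ⊢; linarith
    have hlip := (abs_le.1 (abs_sin_sub_sin_le u 1)).2
    rw [abs_of_nonneg (by linarith)] at hlip
    nlinarith [sin_le_one u]

lemma integral_cos_mul_eq_two_mul_sinc (a c : ℝ) :
    ∫ τ in -a..a, cos (τ * c) = 2 * a * sinc (a * c) := by
  rcases eq_or_ne c 0 with rfl | hc
  · simp; ring
  rcases eq_or_ne a 0 with rfl | ha
  · simp
  rw [intervalIntegral.integral_comp_mul_right cos hc, integral_cos,
    sinc_of_ne_zero (mul_ne_zero ha hc), neg_mul, sin_neg, smul_eq_mul]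
  field_simp
  ring

lemma setLIntegral_Icc_one_sub_cos_mul {a : ℝ} (ha : 0 ≤ a) (c : ℝ) :
    ∫⁻ τ in Set.Icc (-a) a, ENNReal.ofReal (1 - cos (τ * c)) =
      ENNReal.ofReal (2 * a * (1 - sinc (a * c))) := by
  have hint : IntegrableOn (fun τ => 1 - cos (τ * c)) (Set.Icc (-a) a) :=
    (by fun_prop : Continuous fun τ => 1 - cos (τ * c)).integrableOn_Icc
  rw [← ofReal_integral_eq_lintegral_ofReal hint
      (ae_of_all _ fun τ => sub_nonneg.2 (cos_le_one _)),
    integral_Icc_eq_integral_Ioc, ← intervalIntegral.integral_of_le (by linarith),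
    intervalIntegral.integral_sub intervalIntegrable_const
      ((by fun_prop : Continuous fun τ => cos (τ * c)).intervalIntegrable _ _),
    integral_cos_mul_eq_two_mul_sinc, intervalIntegral.integral_const, smul_eq_mul]
  ring_nf

lemma min_one_sq_div_le_sum_one_sub_sinc {d : ℕ} (x : Rd d) (s : ℝ) :
    min 1 (‖x‖ ^ 2 / s ^ 2) ≤ ∑ j, 14 * (1 - sinc (s⁻¹ * x j)) := by
  have hnorm : ‖x‖ ^ 2 / s ^ 2 = ∑ j, (s⁻¹ * x j) ^ 2 := by
    rw [EuclideanSpace.real_norm_sq_eq, Finset.sum_div]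
    simp only [inv_mul_eq_div, div_pow]
  rw [hnorm]
  refine (min_one_sum_le_sum_min_one _ fun j _ => sq_nonneg _).trans
    (Finset.sum_le_sum fun j _ => ?_)
  linarith [sinc_le_one_sub_min_one_sq_div (s⁻¹ * x j)]

lemma hFn_nonneg {d : ℕ} (ν : Measure (Rd d)) (r : ℝ) : 0 ≤ hFn ν r :=
  integral_nonneg fun _ => by positivity

namespace LevyMeasure

variable {d : ℕ} {ν : Measure (Rd d)}

/-- `ν` has density `(min 1 ‖z‖)⁻¹` with respect to the finite measure `min 1 ‖z‖ • ν`. -/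
lemma sFinite (hν : LevyMeasure ν) : SFinite ν := by
  set f : Rd d → ℝ≥0∞ := fun z => ENNReal.ofReal (min 1 ‖z‖)
  have : IsFiniteMeasure (ν.withDensity f) := isFiniteMeasure_withDensity hν.2.ne
  have hf_ne_zero : ∀ᵐ z ∂ν, f z ≠ 0 := by
    refine measure_mono_null (fun z hz => ?_) hν.1
    simp_all [f]
  rw [← withDensity_inv_same (by fun_prop) hf_ne_zero (ae_of_all _ fun _ => ENNReal.ofReal_ne_top)]
  infer_instance

lemma integrable_of_norm_le_mul_min_one (hν : LevyMeasure ν) {E : Type*} [NormedAddCommGroup E]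
    {f : Rd d → E} (hf : AEStronglyMeasurable f ν) (C : ℝ) (hC : ∀ z, ‖f z‖ ≤ C * min 1 ‖z‖) :
    Integrable f ν := by
  have hmin : Integrable (fun z : Rd d => min 1 ‖z‖) ν :=
    ⟨by fun_prop, (hasFiniteIntegral_iff_ofReal (ae_of_all _ fun z => by positivity)).2 hν.2⟩
  exact (hmin.const_mul C).mono' hf (ae_of_all _ hC)

lemma integrable_one_sub_exp (hν : LevyMeasure ν) (ξ : Rd d) :
    Integrable (fun z => 1 - Complex.exp (Complex.I * (inner ℝ ξ z : ℝ))) ν := by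
  refine hν.integrable_of_norm_le_mul_min_one (by fun_prop) (2 * max 1 ‖ξ‖) fun z => ?_
  calc ‖1 - Complex.exp (Complex.I * (inner ℝ ξ z : ℝ))‖ ≤ 2 * min 1 |inner ℝ ξ z| :=
        norm_one_sub_exp_I_mul_le _
    _ ≤ 2 * min 1 (‖ξ‖ * ‖z‖) := by gcongr; exact abs_real_inner_le_norm ξ z
    _ ≤ 2 * (max 1 ‖ξ‖ * min 1 ‖z‖) := by
        gcongr; exact min_one_mul_le_max_mul_min_one _ (norm_nonneg z)
    _ = 2 * max 1 ‖ξ‖ * min 1 ‖z‖ := by ring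

lemma integrable_one_sub_cos (hν : LevyMeasure ν) (ξ : Rd d) :
    Integrable (fun z => 1 - cos (inner ℝ ξ z)) ν := by
  refine ((hν.integrable_one_sub_exp ξ).re).congr (ae_of_all _ fun z => ?_)
  simp [mul_comm Complex.I, Complex.exp_ofReal_mul_I_re]

lemma re_psiSymb (hν : LevyMeasure ν) (ξ : Rd d) :
    (psiSymb ν ξ).re = ∫ z, (1 - cos (inner ℝ ξ z)) ∂ν := by
  rw [psiSymb, ← RCLike.re_to_complex, ← integral_re (hν.integrable_one_sub_exp ξ)]
  simp [mul_comm Complex.I, Complex.exp_ofReal_mul_I_re]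

lemma ofReal_re_psiSymb (hν : LevyMeasure ν) (ξ : Rd d) :
    ENNReal.ofReal (psiSymb ν ξ).re = ∫⁻ z, ENNReal.ofReal (1 - cos (inner ℝ ξ z)) ∂ν := by
  rw [hν.re_psiSymb, ofReal_integral_eq_lintegral_ofReal (hν.integrable_one_sub_cos ξ)
    (ae_of_all _ fun _ => sub_nonneg.2 (cos_le_one _))]

lemma integrable_min_one_sq_div (hν : LevyMeasure ν) (r : ℝ) :
    Integrable (fun z : Rd d => min 1 (‖z‖ ^ 2 / r ^ 2)) ν := by
  refine hν.integrable_of_norm_le_mul_min_one (by fun_prop) (max 1 (r ^ 2)⁻¹) fun z => ?_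
  rw [Real.norm_of_nonneg (by positivity), div_eq_inv_mul]
  calc min 1 ((r ^ 2)⁻¹ * ‖z‖ ^ 2) ≤ max 1 (r ^ 2)⁻¹ * min 1 (‖z‖ ^ 2) :=
        min_one_mul_le_max_mul_min_one _ (by positivity)
    _ ≤ max 1 (r ^ 2)⁻¹ * min 1 ‖z‖ :=
        mul_le_mul_of_nonneg_left (min_one_sq_le_min_one (norm_nonneg z)) (by positivity)

lemma re_psiSymb_le_two_mul_hFn (hν : LevyMeasure ν) {ξ : Rd d} {r : ℝ} (hξ : ‖ξ‖ ≤ r) :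
    (psiSymb ν ξ).re ≤ 2 * hFn ν r⁻¹ := by
  rw [hν.re_psiSymb, hFn, ← integral_const_mul]
  refine integral_mono (hν.integrable_one_sub_cos ξ)
    ((hν.integrable_min_one_sq_div _).const_mul 2) fun z => ?_
  have hinner : inner ℝ ξ z ^ 2 ≤ ‖z‖ ^ 2 / r⁻¹ ^ 2 := by
    rw [inv_pow, div_inv_eq_mul, ← sq_abs]
    calc |inner ℝ ξ z| ^ 2 ≤ (‖ξ‖ * ‖z‖) ^ 2 := by gcongr; exact abs_real_inner_le_norm ξ z
      _ ≤ (r * ‖z‖) ^ 2 := by gcongr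
      _ = ‖z‖ ^ 2 * r ^ 2 := by ring
  calc 1 - cos (inner ℝ ξ z) ≤ 2 * min 1 (inner ℝ ξ z ^ 2) :=
        one_sub_cos_le_two_mul_min_one_sq _
    _ ≤ 2 * min 1 (‖z‖ ^ 2 / r⁻¹ ^ 2) := by gcongr

lemma bddAbove_re_psiSymb (hν : LevyMeasure ν) (r : ℝ) :
    BddAbove {u | ∃ ξ : Rd d, ‖ξ‖ ≤ r ∧ u = (psiSymb ν ξ).re} :=
  ⟨2 * hFn ν r⁻¹, by rintro _ ⟨ξ, hξ, rfl⟩; exact hν.re_psiSymb_le_two_mul_hFn hξ⟩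

lemma re_psiSymb_le_psiStar (hν : LevyMeasure ν) {ξ : Rd d} {r : ℝ} (hξ : ‖ξ‖ ≤ r) :
    (psiSymb ν ξ).re ≤ psiStar ν r :=
  le_csSup (hν.bddAbove_re_psiSymb r) ⟨ξ, hξ, rfl⟩

lemma psiStar_nonneg (hν : LevyMeasure ν) {r : ℝ} (hr : 0 ≤ r) : 0 ≤ psiStar ν r := by
  simpa [psiSymb] using hν.re_psiSymb_le_psiStar (ξ := 0) (by simpa using hr)

lemma psiStar_le_two_mul_hFn (hν : LevyMeasure ν) (r : ℝ) :
    psiStar ν r ≤ 2 * hFn ν r⁻¹ :=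
  Real.sSup_le (by rintro _ ⟨ξ, hξ, rfl⟩; exact hν.re_psiSymb_le_two_mul_hFn hξ)
    (by linarith [hFn_nonneg ν r⁻¹])

lemma lintegral_one_sub_sinc_le_psiStar (hν : LevyMeasure ν) {e : Rd d} (he : ‖e‖ ≤ 1) {a : ℝ}
    (ha : 0 < a) :
    ∫⁻ x, ENNReal.ofReal (1 - sinc (a * inner ℝ e x)) ∂ν ≤ ENNReal.ofReal (psiStar ν a) := by
  have := hν.sFinite
  have hlen : ENNReal.ofReal (2 * a) ≠ 0 := by simpa using ha
  rw [← ENNReal.mul_le_mul_iff_right hlen ENNReal.ofReal_ne_top]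
  calc ENNReal.ofReal (2 * a) * ∫⁻ x, ENNReal.ofReal (1 - sinc (a * inner ℝ e x)) ∂ν
      = ∫⁻ x, (∫⁻ τ in Set.Icc (-a) a, ENNReal.ofReal (1 - cos (τ * inner ℝ e x))) ∂ν := by
        rw [← lintegral_const_mul _ (by fun_prop)]
        refine lintegral_congr fun x => ?_
        rw [setLIntegral_Icc_one_sub_cos_mul ha.le, ENNReal.ofReal_mul (by positivity : 0 ≤ 2 * a)]
    _ = ∫⁻ τ in Set.Icc (-a) a, ENNReal.ofReal (psiSymb ν (τ • e)).re := by
        rw [lintegral_lintegral_swap (by fun_prop)]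
        simp_rw [hν.ofReal_re_psiSymb, real_inner_smul_left]
    _ ≤ ∫⁻ _ in Set.Icc (-a) a, ENNReal.ofReal (psiStar ν a) := by
        refine setLIntegral_mono (by fun_prop) fun τ hτ => ENNReal.ofReal_le_ofReal ?_
        refine hν.re_psiSymb_le_psiStar ?_
        rw [norm_smul, Real.norm_eq_abs]
        nlinarith [abs_le.2 hτ, norm_nonneg e, abs_nonneg τ]
    _ = ENNReal.ofReal (2 * a) * ENNReal.ofReal (psiStar ν a) := by
        rw [setLIntegral_const, Real.volume_Icc, mul_comm]
        ring_nf

lemma hFn_le_psiStar_inv (hν : LevyMeasure ν) {s : ℝ} (hs : 0 < s) :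
    hFn ν s ≤ 14 * d * psiStar ν s⁻¹ := by
  have hψ := hν.psiStar_nonneg (inv_nonneg.2 hs.le)
  have hsinc : ∀ u, 0 ≤ 1 - sinc u := fun u => sub_nonneg.2 (sinc_le_one u)
  rw [← ENNReal.ofReal_le_ofReal_iff (by positivity), hFn,
    ofReal_integral_eq_lintegral_ofReal (hν.integrable_min_one_sq_div s)
      (ae_of_all _ fun _ => by positivity)]
  calc ∫⁻ x, ENNReal.ofReal (min 1 (‖x‖ ^ 2 / s ^ 2)) ∂ν
      ≤ ∫⁻ x, ∑ j, ENNReal.ofReal 14 *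
          ENNReal.ofReal (1 - sinc (s⁻¹ * inner ℝ (EuclideanSpace.single j 1) x)) ∂ν := by
        refine lintegral_mono fun x => ?_
        refine (ENNReal.ofReal_le_ofReal (min_one_sq_div_le_sum_one_sub_sinc x s)).trans_eq ?_
        rw [ENNReal.ofReal_sum_of_nonneg fun j _ => mul_nonneg (by norm_num) (hsinc _)]
        simp [ENNReal.ofReal_mul, EuclideanSpace.inner_single_left]
    _ = ∑ j, ENNReal.ofReal 14 *
          ∫⁻ x, ENNReal.ofReal (1 - sinc (s⁻¹ * inner ℝ (EuclideanSpace.single j 1) x)) ∂ν := by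
        rw [lintegral_finsetSum _ fun j _ => by fun_prop]
        exact Finset.sum_congr rfl fun j _ => lintegral_const_mul _ (by fun_prop)
    _ ≤ ∑ _j : Fin d, ENNReal.ofReal 14 * ENNReal.ofReal (psiStar ν s⁻¹) := by
        gcongr with j
        exact hν.lintegral_one_sub_sinc_le_psiStar (by simp) (inv_pos.2 hs)
    _ = ENNReal.ofReal (14 * d * psiStar ν s⁻¹) := by
        rw [Finset.sum_const, Finset.card_univ, Fintype.card_fin, nsmul_eq_mul,
          ENNReal.ofReal_mul (by positivity), ENNReal.ofReal_mul (by norm_num), ENNReal.ofReal_natCast]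
        ring
end LevyMeasure

theorem stmt0_general {d : ℕ} (ν : Measure (Rd d)) (hν : LevyMeasure ν)
    (α Cb θ₀ : ℝ) (hCb : 1 ≤ Cb)
    (hpsi : WUSC α θ₀ Cb (psiStar ν)) :
    ∀ lam : ℝ, 0 < lam → lam ≤ 1 → ∀ r : ℝ, 0 < r → θ₀ * r < 1 →
      hFn ν (lam * r) ≤ 16 * (1 + 2 * (d : ℝ)) * Cb * lam ^ (-α) * hFn ν r := by
  intro lam hlam hlam1 r hr hθr
  have hfactor : 0 ≤ Cb * lam ^ (-α) := by positivity
  have hscale : psiStar ν (lam⁻¹ * r⁻¹) ≤ Cb * lam ^ (-α) * psiStar ν r⁻¹ := by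
    rw [rpow_neg hlam.le, ← inv_rpow hlam.le]
    refine hpsi _ (one_le_inv₀ hlam |>.2 hlam1) _ ?_
    rwa [gt_iff_lt, ← one_div, lt_div_iff₀ hr]
  calc hFn ν (lam * r) ≤ 14 * d * psiStar ν (lam⁻¹ * r⁻¹) := by
        rw [← mul_inv]; exact hν.hFn_le_psiStar_inv (by positivity)
    _ ≤ 14 * d * (Cb * lam ^ (-α) * (2 * hFn ν r)) := by
        gcongr
        refine hscale.trans (mul_le_mul_of_nonneg_left ?_ hfactor)
        simpa using hν.psiStar_le_two_mul_hFn r⁻¹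
    _ ≤ 16 * (1 + 2 * (d : ℝ)) * Cb * lam ^ (-α) * hFn ν r := by
        have := mul_nonneg hfactor (hFn_nonneg ν r)
        nlinarith [mul_nonneg (Nat.cast_nonneg d) this]

/-- If `ψ* ∈ WUSC(α, θ₀, C̄)` then for all `λ ∈ (0,1]` and `r > 0` with
`θ₀ r < 1` (i.e. `r < 1/θ₀`, all `r > 0` if `θ₀ = 0`), `h(λr) ≤ 16(1+2d) C̄ λ^{-α} h(r)`. -/
theorem stmt0 {d : ℕ} (hd : 1 ≤ d) (ν : Measure (Rd d)) (hν : LevyMeasure ν)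
    (α Cb θ₀ : ℝ) (hα : α ∈ Set.Ioc (0 : ℝ) 2) (hCb : 1 ≤ Cb) (hθ₀ : 0 ≤ θ₀)
    (hpsi : WUSC α θ₀ Cb (psiStar ν)) :
    ∀ lam : ℝ, 0 < lam → lam ≤ 1 → ∀ r : ℝ, 0 < r → θ₀ * r < 1 →
      hFn ν (lam * r) ≤ 16 * (1 + 2 * (d : ℝ)) * Cb * lam ^ (-α) * hFn ν r :=
  stmt0_general ν hν α Cb θ₀ hCb hpsi
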